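/- arXiv:2408.07359 — 5 statements merged into one kernel-verified Lean document; each statement's English description precedes it below -/
import Mathlib

section
/- If f : I → ℝ is a positive smooth function on an open interval I satisfying the second-order ODE f''f - (7/4)(f')² + (4/3)f² + 4f⁴ + (4/3)c²f⁵ = 0, then the quantity (f')²/f^{7/2} + (16/9)c² f^{3/2} + 16 f^{1/2} - (16/9) f^{-3/2} is constant on I; equivalently, there exists a real constant C such that (f')² - (16/9)f² + 16f⁴ + (16/9)c²f⁵ - 2Cf^{7/2} = 0 on I. -/
/-- If a positive `C²` function `f` on an open interval satisfies
`f''f - (7/4)(f')² + (4/3)f² + 4f⁴ + (4/3)c²f⁵ = 0`, then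
`(f')²/f^{7/2} + (16/9)c²f^{3/2} + 16 f^{1/2} - (16/9) f^{-3/2}` is constant;
equivalently there is `C` with
`(f')² - (16/9)f² + 16f⁴ + (16/9)c²f⁵ - 2Cf^{7/2} = 0`. -/
theorem stmt_2 (c a b : ℝ) (hc : c ≠ 0) (f f' f'' : ℝ → ℝ)
    (hpos : ∀ u ∈ Set.Ioo a b, 0 < f u)
    (hdf : ∀ u ∈ Set.Ioo a b, HasDerivAt f (f' u) u)
    (hdf' : ∀ u ∈ Set.Ioo a b, HasDerivAt f' (f'' u) u)
    (hode : ∀ u ∈ Set.Ioo a b,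
      f'' u * f u - 7/4 * (f' u) ^ 2 + 4/3 * (f u) ^ 2 + 4 * (f u) ^ 4
        + 4/3 * c ^ 2 * (f u) ^ 5 = 0) :
    (∀ u ∈ Set.Ioo a b, ∀ v ∈ Set.Ioo a b,
        (f' u) ^ 2 / (f u) ^ ((7:ℝ)/2) + 16/9 * c ^ 2 * (f u) ^ ((3:ℝ)/2)
          + 16 * (f u) ^ ((1:ℝ)/2) - 16/9 * (f u) ^ (-(3:ℝ)/2)
      = (f' v) ^ 2 / (f v) ^ ((7:ℝ)/2) + 16/9 * c ^ 2 * (f v) ^ ((3:ℝ)/2)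
          + 16 * (f v) ^ ((1:ℝ)/2) - 16/9 * (f v) ^ (-(3:ℝ)/2)) ∧
    ∃ C : ℝ, ∀ u ∈ Set.Ioo a b,
      (f' u) ^ 2 - 16/9 * (f u) ^ 2 + 16 * (f u) ^ 4 + 16/9 * c ^ 2 * (f u) ^ 5
        - 2 * C * (f u) ^ ((7:ℝ)/2) = 0 := by
  set g : ℝ → ℝ := fun x => (f' x) ^ 2 / (f x) ^ ((7:ℝ)/2) + 16/9 * c ^ 2 * (f x) ^ ((3:ℝ)/2)
      + 16 * (f x) ^ ((1:ℝ)/2) - 16/9 * (f x) ^ (-(3:ℝ)/2) with hg_def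
  -- pointwise rewriting of `g` as multiplications (valid where `f > 0`)
  have hptw : ∀ x ∈ Set.Ioo a b, g x = (f' x) ^ 2 * (f x) ^ (-(7:ℝ)/2)
        + 16/9 * c ^ 2 * (f x) ^ ((3:ℝ)/2)
        + 16 * (f x) ^ ((1:ℝ)/2) - 16/9 * (f x) ^ (-(3:ℝ)/2) := by
    intro x hx
    have hfx : (0:ℝ) ≤ f x := (hpos x hx).le
    rw [hg_def]
    simp only
    rw [show (-(7:ℝ)/2) = -((7:ℝ)/2) by norm_num, Real.rpow_neg hfx, div_eq_mul_inv]
  have hgd : ∀ u ∈ Set.Ioo a b, HasDerivAt g 0 u := by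
    intro u hu
    have hfu : 0 < f u := hpos u hu
    have hfne : f u ≠ 0 := ne_of_gt hfu
    have h1 : HasDerivAt (fun x => (f' x) ^ 2) (2 * f' u ^ 1 * f'' u) u :=
      (hdf' u hu).pow 2
    have h2 : HasDerivAt (fun x => (f x) ^ (-(7:ℝ)/2))
        (f' u * (-(7:ℝ)/2) * f u ^ (-(7:ℝ)/2 - 1)) u :=
      (hdf u hu).rpow_const (Or.inl hfne)
    have h3 : HasDerivAt (fun x => (f x) ^ ((3:ℝ)/2))
        (f' u * ((3:ℝ)/2) * f u ^ ((3:ℝ)/2 - 1)) u :=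
      (hdf u hu).rpow_const (Or.inl hfne)
    have h4 : HasDerivAt (fun x => (f x) ^ ((1:ℝ)/2))
        (f' u * ((1:ℝ)/2) * f u ^ ((1:ℝ)/2 - 1)) u :=
      (hdf u hu).rpow_const (Or.inl hfne)
    have h5 : HasDerivAt (fun x => (f x) ^ (-(3:ℝ)/2))
        (f' u * (-(3:ℝ)/2) * f u ^ (-(3:ℝ)/2 - 1)) u :=
      (hdf u hu).rpow_const (Or.inl hfne)
    have hG : HasDerivAt (fun x => (f' x) ^ 2 * (f x) ^ (-(7:ℝ)/2)
          + 16/9 * c ^ 2 * (f x) ^ ((3:ℝ)/2)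
          + 16 * (f x) ^ ((1:ℝ)/2) - 16/9 * (f x) ^ (-(3:ℝ)/2))
        ((2 * f' u ^ 1 * f'' u) * (f u) ^ (-(7:ℝ)/2)
          + (f' u) ^ 2 * (f' u * (-(7:ℝ)/2) * f u ^ (-(7:ℝ)/2 - 1))
          + 16/9 * c ^ 2 * (f' u * ((3:ℝ)/2) * f u ^ ((3:ℝ)/2 - 1))
          + 16 * (f' u * ((1:ℝ)/2) * f u ^ ((1:ℝ)/2 - 1))
          - 16/9 * (f' u * (-(3:ℝ)/2) * f u ^ (-(3:ℝ)/2 - 1))) u :=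
      (((h1.mul h2).add (h3.const_mul (16/9 * c ^ 2))).add (h4.const_mul 16)).sub
        (h5.const_mul (16/9))
    have heq : g =ᶠ[nhds u] (fun x => (f' x) ^ 2 * (f x) ^ (-(7:ℝ)/2)
          + 16/9 * c ^ 2 * (f x) ^ ((3:ℝ)/2)
          + 16 * (f x) ^ ((1:ℝ)/2) - 16/9 * (f x) ^ (-(3:ℝ)/2)) :=
      Filter.eventuallyEq_of_mem (isOpen_Ioo.mem_nhds hu) hptw
    have hG' := hG.congr_of_eventuallyEq heq
    refine hG'.congr_deriv (Eq.symm ?_)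
    -- show the derivative expression is `0`
    have e1 : f u ^ (-(7:ℝ)/2) = f u ^ (-(9:ℝ)/2) * f u := by
      rw [show (-(7:ℝ)/2) = -(9:ℝ)/2 + 1 by norm_num, Real.rpow_add hfu, Real.rpow_one]
    have e2 : f u ^ (-(7:ℝ)/2 - 1) = f u ^ (-(9:ℝ)/2) := by norm_num
    have e3 : f u ^ ((3:ℝ)/2 - 1) = f u ^ (-(9:ℝ)/2) * (f u) ^ 5 := by
      rw [show ((3:ℝ)/2 - 1) = -(9:ℝ)/2 + (5:ℕ) by norm_num, Real.rpow_add hfu,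
        Real.rpow_natCast]
    have e4 : f u ^ ((1:ℝ)/2 - 1) = f u ^ (-(9:ℝ)/2) * (f u) ^ 4 := by
      rw [show ((1:ℝ)/2 - 1) = -(9:ℝ)/2 + (4:ℕ) by norm_num, Real.rpow_add hfu,
        Real.rpow_natCast]
    have e5 : f u ^ (-(3:ℝ)/2 - 1) = f u ^ (-(9:ℝ)/2) * (f u) ^ 2 := by
      rw [show (-(3:ℝ)/2 - 1) = -(9:ℝ)/2 + (2:ℕ) by norm_num, Real.rpow_add hfu,
        Real.rpow_natCast]
    rw [e1, e2, e3, e4, e5]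
    linear_combination (-(2:ℝ) * f' u * f u ^ (-(9:ℝ)/2)) * hode u hu
  -- constancy
  have hconst : ∀ u ∈ Set.Ioo a b, ∀ v ∈ Set.Ioo a b, g u = g v := by
    have key : ∀ u ∈ Set.Ioo a b, ∀ v ∈ Set.Ioo a b, u ≤ v → g v = g u := by
      intro u hu v hv huv
      have hsub : Set.Icc u v ⊆ Set.Ioo a b := fun x hx =>
        ⟨lt_of_lt_of_le hu.1 hx.1, lt_of_le_of_lt hx.2 hv.2⟩
      have hcont : ContinuousOn g (Set.Icc u v) := fun x hx =>
        ((hgd x (hsub hx)).continuousAt).continuousWithinAt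
      have hder : ∀ x ∈ Set.Ico u v, HasDerivWithinAt g 0 (Set.Ici x) x := fun x hx =>
        (hgd x (hsub ⟨hx.1, hx.2.le⟩)).hasDerivWithinAt
      exact constant_of_has_deriv_right_zero hcont hder v ⟨huv, le_rfl⟩
    intro u hu v hv
    rcases le_total u v with h | h
    · exact (key u hu v hv h).symm
    · exact key v hv u hu h
  refine ⟨hconst, ?_⟩
  rcases Set.eq_empty_or_nonempty (Set.Ioo a b) with he | ⟨u₀, hu₀⟩
  · exact ⟨0, fun u hu => absurd (he ▸ hu) (Set.notMem_empty u)⟩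
  refine ⟨g u₀ / 2, fun u hu => ?_⟩
  have hfu : 0 < f u := hpos u hu
  have hgu : g u = g u₀ := hconst u hu u₀ hu₀
  have h2C : 2 * (g u₀ / 2) * (f u) ^ ((7:ℝ)/2) = g u * (f u) ^ ((7:ℝ)/2) := by
    rw [hgu]; ring
  rw [h2C, hg_def]
  simp only
  have hne : (f u) ^ ((7:ℝ)/2) ≠ 0 := (Real.rpow_pos_of_pos hfu _).ne'
  have m1 : (f u) ^ ((3:ℝ)/2) * (f u) ^ ((7:ℝ)/2) = (f u) ^ 5 := by
    rw [← Real.rpow_add hfu, show ((3:ℝ)/2 + 7/2) = ((5:ℕ):ℝ) by norm_num,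
      Real.rpow_natCast]
  have m2 : (f u) ^ ((1:ℝ)/2) * (f u) ^ ((7:ℝ)/2) = (f u) ^ 4 := by
    rw [← Real.rpow_add hfu, show ((1:ℝ)/2 + 7/2) = ((4:ℕ):ℝ) by norm_num,
      Real.rpow_natCast]
  have m3 : (f u) ^ (-(3:ℝ)/2) * (f u) ^ ((7:ℝ)/2) = (f u) ^ 2 := by
    rw [← Real.rpow_add hfu, show (-(3:ℝ)/2 + 7/2) = ((2:ℕ):ℝ) by norm_num,
      Real.rpow_natCast]
  have m4 : (f' u) ^ 2 / (f u) ^ ((7:ℝ)/2) * (f u) ^ ((7:ℝ)/2) = (f' u) ^ 2 :=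
    div_mul_cancel₀ _ hne
  calc (f' u) ^ 2 - 16/9 * (f u) ^ 2 + 16 * (f u) ^ 4 + 16/9 * c ^ 2 * (f u) ^ 5
      - ((f' u) ^ 2 / (f u) ^ ((7:ℝ)/2) + 16/9 * c ^ 2 * (f u) ^ ((3:ℝ)/2)
          + 16 * (f u) ^ ((1:ℝ)/2) - 16/9 * (f u) ^ (-(3:ℝ)/2)) * (f u) ^ ((7:ℝ)/2)
      = (f' u) ^ 2 - 16/9 * (f u) ^ 2 + 16 * (f u) ^ 4 + 16/9 * c ^ 2 * (f u) ^ 5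
        - ((f' u) ^ 2 + 16/9 * c ^ 2 * (f u) ^ 5 + 16 * (f u) ^ 4 - 16/9 * (f u) ^ 2) := by
        linear_combination (-(1:ℝ)) * m4 - (16/9 * c ^ 2) * m1 - 16 * m2 + 16/9 * m3
    _ = 0 := by ring
end

section
/- Let f be a positive C³ function of u satisfying f''f - (7/4)(f')² + (4/3)f² + 4f⁴ + (4/3)c²f⁵ = 0 with f' > 0 and c ≠ 0, and set κ = (3/4)(f'/f). Then c² = (κ² - κ' - 1)/f³ - 3/f, and consequently κ² - κ' - 1 - 3f² > 0. -/
/-- If `f` is positive `C³` with `f' > 0` satisfying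
`f''f - (7/4)(f')² + (4/3)f² + 4f⁴ + (4/3)c²f⁵ = 0`, `c ≠ 0`, and `κ = (3/4)f'/f`,
then `c² = (κ² - κ' - 1)/f³ - 3/f`, hence `κ² - κ' - 1 - 3f² > 0`. -/
theorem stmt_12 (c a b : ℝ) (hc : c ≠ 0) (f f' f'' f''' κ κ' : ℝ → ℝ)
    (hpos : ∀ u ∈ Set.Ioo a b, 0 < f u)
    (hfpos' : ∀ u ∈ Set.Ioo a b, 0 < f' u)
    (hdf : ∀ u ∈ Set.Ioo a b, HasDerivAt f (f' u) u)
    (hdf' : ∀ u ∈ Set.Ioo a b, HasDerivAt f' (f'' u) u)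
    (hdf'' : ∀ u ∈ Set.Ioo a b, HasDerivAt f'' (f''' u) u)
    (hκdef : ∀ u ∈ Set.Ioo a b, κ u = 3/4 * f' u / f u)
    (hdκ : ∀ u ∈ Set.Ioo a b, HasDerivAt κ (κ' u) u)
    (hode : ∀ u ∈ Set.Ioo a b,
      f'' u * f u - 7/4 * (f' u) ^ 2 + 4/3 * (f u) ^ 2 + 4 * (f u) ^ 4
        + 4/3 * c ^ 2 * (f u) ^ 5 = 0) :
    ∀ u ∈ Set.Ioo a b,
      c ^ 2 = ((κ u) ^ 2 - κ' u - 1) / (f u) ^ 3 - 3 / f u ∧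
      0 < (κ u) ^ 2 - κ' u - 1 - 3 * (f u) ^ 2 := by
  intro u hu
  have hfu := (hpos u hu).ne'
  -- derivative of 3/4 * f' / f at u
  have hg : HasDerivAt (fun x => 3/4 * f' x / f x)
      ((3/4 * f'' u * f u - 3/4 * f' u * f' u) / (f u) ^ 2) u :=
    ((hdf' u hu).const_mul (3/4)).div (hdf u hu) hfu
  have hev : (fun x => 3/4 * f' x / f x) =ᶠ[nhds u] κ := by
    filter_upwards [isOpen_Ioo.mem_nhds hu] with x hx
    exact (hκdef x hx).symm
  have hκ' : κ' u = (3/4 * f'' u * f u - 3/4 * f' u * f' u) / (f u) ^ 2 :=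
    ((hg.congr_of_eventuallyEq hev.symm).unique (hdκ u hu)).symm
  have hode' := hode u hu
  have hκu := hκdef u hu
  have key : (κ u) ^ 2 - κ' u - 1 - 3 * (f u) ^ 2 = c ^ 2 * (f u) ^ 3 := by
    rw [hκ', hκu]
    field_simp
    nlinarith [hode', sq_nonneg (f u)]
  constructor
  · rw [div_sub_div _ _ (pow_ne_zero 3 hfu) hfu]
    rw [eq_div_iff (by positivity)]
    linear_combination (-f u) * key
  · rw [key]
    have h2 : 0 < c ^ 2 := by positivity
    exact mul_pos h2 (pow_pos (hpos u hu) 3)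
end

section
/- Let f be a positive C³ function of u with f' > 0 satisfying f''f - (7/4)(f')² + (4/3)f² + 4f⁴ + (4/3)c²f⁵ = 0 for some c ≠ 0, and set κ = (3/4)(f'/f). Then -κ'' + 6κκ' + 4κ - 4κ³ + 4κf² = 0 holds on the interval. -/
/-- If `f` is positive `C³` with `f' > 0` satisfying
`f''f - (7/4)(f')² + (4/3)f² + 4f⁴ + (4/3)c²f⁵ = 0`, `c ≠ 0`, and `κ = (3/4)f'/f`,
then `-κ'' + 6κκ' + 4κ - 4κ³ + 4κf² = 0`. -/
theorem stmt_13 (c a b : ℝ) (hc : c ≠ 0) (f f' f'' f''' κ κ' κ'' : ℝ → ℝ)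
    (hpos : ∀ u ∈ Set.Ioo a b, 0 < f u)
    (hfpos' : ∀ u ∈ Set.Ioo a b, 0 < f' u)
    (hdf : ∀ u ∈ Set.Ioo a b, HasDerivAt f (f' u) u)
    (hdf' : ∀ u ∈ Set.Ioo a b, HasDerivAt f' (f'' u) u)
    (hdf'' : ∀ u ∈ Set.Ioo a b, HasDerivAt f'' (f''' u) u)
    (hκdef : ∀ u ∈ Set.Ioo a b, κ u = 3/4 * f' u / f u)
    (hdκ : ∀ u ∈ Set.Ioo a b, HasDerivAt κ (κ' u) u)
    (hdκ' : ∀ u ∈ Set.Ioo a b, HasDerivAt κ' (κ'' u) u)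
    (hode : ∀ u ∈ Set.Ioo a b,
      f'' u * f u - 7/4 * (f' u) ^ 2 + 4/3 * (f u) ^ 2 + 4 * (f u) ^ 4
        + 4/3 * c ^ 2 * (f u) ^ 5 = 0) :
    ∀ u ∈ Set.Ioo a b,
      -κ'' u + 6 * κ u * κ' u + 4 * κ u - 4 * (κ u) ^ 3 + 4 * κ u * (f u) ^ 2 = 0 := by
  have hf0 : ∀ v ∈ Set.Ioo a b, f v ≠ 0 := fun v hv => (hpos v hv).ne'
  -- κ' formula on the interval
  have hκ'eq : ∀ v ∈ Set.Ioo a b,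
      κ' v = 3/4 * (f'' v * f v - (f' v)^2) / (f v)^2 := by
    intro v hv
    have hm : Set.Ioo a b ∈ nhds v := isOpen_Ioo.mem_nhds hv
    have hg : HasDerivAt (fun w => 3/4 * f' w / f w)
        ((3/4 * f'' v * f v - 3/4 * f' v * f' v) / (f v)^2) v :=
      ((hdf' v hv).const_mul (3/4 : ℝ)).div (hdf v hv) (hf0 v hv)
    have hκg : HasDerivAt κ ((3/4 * f'' v * f v - 3/4 * f' v * f' v) / (f v)^2) v :=
      hg.congr_of_eventuallyEq (Filter.eventuallyEq_of_mem hm (fun w hw => hκdef w hw))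
    have h := (hdκ v hv).unique hκg
    rw [h]; ring
  intro u hu
  have hm : Set.Ioo a b ∈ nhds u := isOpen_Ioo.mem_nhds hu
  have hF : f u ≠ 0 := hf0 u hu
  -- derivative of the ODE
  have hode' : f''' u * f u + f'' u * f' u - 7/4 * (2 * f' u * f'' u)
      + 4/3 * (2 * f u * f' u) + 4 * (4 * (f u)^3 * f' u)
      + 4/3 * c^2 * (5 * (f u)^4 * f' u) = 0 := by
    have hE : HasDerivAt (fun v => f'' v * f v - 7/4 * (f' v) ^ 2 + 4/3 * (f v) ^ 2
        + 4 * (f v) ^ 4 + 4/3 * c ^ 2 * (f v) ^ 5)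
        (f''' u * f u + f'' u * f' u - 7/4 * (2 * f' u * f'' u)
          + 4/3 * (2 * f u * f' u) + 4 * (4 * (f u)^3 * f' u)
          + 4/3 * c^2 * (5 * (f u)^4 * f' u)) u := by
      have h1 := (hdf'' u hu).mul (hdf u hu)
      have h2 := ((hdf' u hu).pow 2).const_mul (7/4 : ℝ)
      have h3 := ((hdf u hu).pow 2).const_mul (4/3 : ℝ)
      have h4 := ((hdf u hu).pow 4).const_mul (4 : ℝ)
      have h5 := ((hdf u hu).pow 5).const_mul (4/3 * c^2 : ℝ)
      have := (((h1.sub h2).add h3).add h4).add h5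
      exact this.congr_deriv (by ring)
    have hE0 : HasDerivAt (fun _ : ℝ => (0 : ℝ))
        (f''' u * f u + f'' u * f' u - 7/4 * (2 * f' u * f'' u)
          + 4/3 * (2 * f u * f' u) + 4 * (4 * (f u)^3 * f' u)
          + 4/3 * c^2 * (5 * (f u)^4 * f' u)) u :=
      hE.congr_of_eventuallyEq (Filter.eventuallyEq_of_mem hm
        (fun w hw => (hode w hw).symm))
    exact ((hasDerivAt_const u (0:ℝ)).unique hE0).symm
  -- κ'' formula at u
  have hκ''eq : κ'' u = 3/4 * ((f''' u * f u + f'' u * f' u - 2 * f' u * f'' u) * (f u)^2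
      - (f'' u * f u - (f' u)^2) * (2 * f u * f' u)) / ((f u)^2)^2 := by
    have hnum : HasDerivAt (fun w => 3/4 * (f'' w * f w - (f' w)^2))
        (3/4 * (f''' u * f u + f'' u * f' u - 2 * f' u * f'' u)) u := by
      have := (((hdf'' u hu).mul (hdf u hu)).sub ((hdf' u hu).pow 2)).const_mul (3/4 : ℝ)
      exact this.congr_deriv (by ring)
    have hden : HasDerivAt (fun w => (f w)^2) (2 * f u * f' u) u := by
      have := (hdf u hu).pow 2
      exact this.congr_deriv (by ring)
    have hden0 : (f u)^2 ≠ 0 := pow_ne_zero 2 hF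
    have hg := hnum.div hden hden0
    have hκ'g : HasDerivAt κ'
        ((3/4 * (f''' u * f u + f'' u * f' u - 2 * f' u * f'' u) * (f u)^2
          - 3/4 * (f'' u * f u - (f' u)^2) * (2 * f u * f' u)) / ((f u)^2)^2) u :=
      hg.congr_of_eventuallyEq (Filter.eventuallyEq_of_mem hm
        (fun w hw => hκ'eq w hw))
    have h := (hdκ' u hu).unique hκ'g
    rw [h]; ring
  have h1 := hode u hu
  rw [hκ''eq, hκ'eq u hu, hκdef u hu]
  field_simp
  linear_combination 12 * (5 * f' u * h1 - f u * hode')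
end

section
/- Let f be a positive C⁴ function of u with f' > 0 satisfying f''f - (7/4)(f')² + (4/3)f² + 4f⁴ + (4/3)c²f⁵ = 0 for some c ≠ 0, and set κ = (3/4)(f'/f). Then κ satisfies the third-order ODE 3κκ''' - 26κ²κ'' - 3κ'κ'' + 72κ³κ' + 32κ³ - 32κ⁵ = 0. -/
/-- If `f` is positive `C⁴` with `f' > 0` satisfying
`f''f - (7/4)(f')² + (4/3)f² + 4f⁴ + (4/3)c²f⁵ = 0`, `c ≠ 0`, and `κ = (3/4)f'/f`,
then `3κκ''' - 26κ²κ'' - 3κ'κ'' + 72κ³κ' + 32κ³ - 32κ⁵ = 0`. -/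
theorem stmt_14 (c a b : ℝ) (hc : c ≠ 0) (f f' f'' f''' f'''' κ κ' κ'' κ''' : ℝ → ℝ)
    (hpos : ∀ u ∈ Set.Ioo a b, 0 < f u)
    (hfpos' : ∀ u ∈ Set.Ioo a b, 0 < f' u)
    (hdf : ∀ u ∈ Set.Ioo a b, HasDerivAt f (f' u) u)
    (hdf' : ∀ u ∈ Set.Ioo a b, HasDerivAt f' (f'' u) u)
    (hdf'' : ∀ u ∈ Set.Ioo a b, HasDerivAt f'' (f''' u) u)
    (hdf''' : ∀ u ∈ Set.Ioo a b, HasDerivAt f''' (f'''' u) u)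
    (hκdef : ∀ u ∈ Set.Ioo a b, κ u = 3/4 * f' u / f u)
    (hdκ : ∀ u ∈ Set.Ioo a b, HasDerivAt κ (κ' u) u)
    (hdκ' : ∀ u ∈ Set.Ioo a b, HasDerivAt κ' (κ'' u) u)
    (hdκ'' : ∀ u ∈ Set.Ioo a b, HasDerivAt κ'' (κ''' u) u)
    (hode : ∀ u ∈ Set.Ioo a b,
      f'' u * f u - 7/4 * (f' u) ^ 2 + 4/3 * (f u) ^ 2 + 4 * (f u) ^ 4
        + 4/3 * c ^ 2 * (f u) ^ 5 = 0) :
    ∀ u ∈ Set.Ioo a b,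
      3 * κ u * κ''' u - 26 * (κ u) ^ 2 * κ'' u - 3 * κ' u * κ'' u
        + 72 * (κ u) ^ 3 * κ' u + 32 * (κ u) ^ 3 - 32 * (κ u) ^ 5 = 0 := by
  -- Step 1: κ' = κ² - 1 - 3f² - c²f³ on the interval.
  have hK1 : ∀ u ∈ Set.Ioo a b,
      κ' u = (κ u) ^ 2 - 1 - 3 * (f u) ^ 2 - c ^ 2 * (f u) ^ 3 := by
    intro u hu
    have hfne : f u ≠ 0 := (hpos u hu).ne'
    have hdiv : HasDerivAt (fun x => 3/4 * f' x / f x)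
        ((3/4 * f'' u * f u - 3/4 * f' u * f' u) / (f u) ^ 2) u :=
      (((hdf' u hu).const_mul (3/4 : ℝ)).div (hdf u hu) hfne)
    have hev : κ =ᶠ[nhds u] fun x => 3/4 * f' x / f x :=
      Filter.eventuallyEq_of_mem (isOpen_Ioo.mem_nhds hu) (fun x hx => hκdef x hx)
    have huniq : κ' u = (3/4 * f'' u * f u - 3/4 * f' u * f' u) / (f u) ^ 2 :=
      (hdκ u hu).unique (hdiv.congr_of_eventuallyEq hev)
    have hk := hκdef u hu
    have ho := hode u hu
    rw [huniq, hk]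
    field_simp
    ring_nf
    nlinarith [ho, sq_nonneg (f u)]
  -- Step 2: 4κf² = κ'' - 6κκ' - 4κ + 4κ³ on the interval.
  have hK2 : ∀ u ∈ Set.Ioo a b,
      4 * κ u * (f u) ^ 2 = κ'' u - 6 * κ u * κ' u - 4 * κ u + 4 * (κ u) ^ 3 := by
    intro u hu
    have hfne : f u ≠ 0 := (hpos u hu).ne'
    have hg : HasDerivAt (fun x => c ^ 2 * (f x) ^ 3)
        (c ^ 2 * (3 * (f u) ^ 2 * f' u)) u := by
      have := ((hdf u hu).pow 3).const_mul (c ^ 2)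
      simpa [mul_comm, mul_assoc, mul_left_comm] using this
    have hh : HasDerivAt (fun x => (κ x) ^ 2 - κ' x - 1 - 3 * (f x) ^ 2)
        (2 * κ u * κ' u - κ'' u - 3 * (2 * f u * f' u)) u := by
      have h1 := ((hdκ u hu).pow 2).sub (hdκ' u hu)
      have h2 := (h1.sub (hasDerivAt_const u (1:ℝ))).sub (((hdf u hu).pow 2).const_mul 3)
      exact h2.congr_deriv (by norm_num)
    have hev : (fun x => c ^ 2 * (f x) ^ 3)
        =ᶠ[nhds u] fun x => (κ x) ^ 2 - κ' x - 1 - 3 * (f x) ^ 2 :=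
      Filter.eventuallyEq_of_mem (isOpen_Ioo.mem_nhds hu)
        (fun x hx => by have := hK1 x hx; linarith)
    have heq : c ^ 2 * (3 * (f u) ^ 2 * f' u)
        = 2 * κ u * κ' u - κ'' u - 3 * (2 * f u * f' u) :=
      hg.unique (hh.congr_of_eventuallyEq hev)
    have hfp : f' u = 4/3 * κ u * f u := by
      have hk := hκdef u hu
      field_simp at hk
      linarith
    have h1 := hK1 u hu
    -- c² f³ = κ² - κ' - 1 - 3f²
    have hc3 : c ^ 2 * (f u) ^ 3 = (κ u) ^ 2 - κ' u - 1 - 3 * (f u) ^ 2 := by linarith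
    -- substitute f' into heq
    rw [hfp] at heq
    linear_combination -heq + 4 * κ u * hc3
  -- Step 3: 4κ'f² + (32/3)κ²f² = κ''' - 6κ'² - 6κκ'' - 4κ' + 12κ²κ'.
  have hK3 : ∀ u ∈ Set.Ioo a b,
      4 * κ' u * (f u) ^ 2 + 32/3 * (κ u) ^ 2 * (f u) ^ 2
        = κ''' u - 6 * (κ' u) ^ 2 - 6 * κ u * κ'' u - 4 * κ' u + 12 * (κ u) ^ 2 * κ' u := by
    intro u hu
    have hfne : f u ≠ 0 := (hpos u hu).ne'
    have hg : HasDerivAt (fun x => 4 * κ x * (f x) ^ 2)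
        (4 * κ' u * (f u) ^ 2 + 4 * κ u * (2 * f u * f' u)) u := by
      have := ((hdκ u hu).const_mul (4:ℝ)).mul ((hdf u hu).pow 2)
      exact this.congr_deriv (by norm_num)
    have hh : HasDerivAt (fun x => κ'' x - 6 * κ x * κ' x - 4 * κ x + 4 * (κ x) ^ 3)
        (κ''' u - 6 * (κ' u * κ' u + κ u * κ'' u) - 4 * κ' u
          + 4 * (3 * (κ u) ^ 2 * κ' u)) u := by
      have h1 := (hdκ'' u hu).sub ((((hdκ u hu).mul (hdκ' u hu))).const_mul (6:ℝ))
      have h2 := h1.sub ((hdκ u hu).const_mul (4:ℝ))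
      have h3 := h2.add (((hdκ u hu).pow 3).const_mul (4:ℝ))
      have hfun : (fun x => κ'' x - 6 * κ x * κ' x - 4 * κ x + 4 * (κ x) ^ 3)
          = fun x => κ'' x - 6 * (κ x * κ' x) - 4 * κ x + 4 * κ x ^ 3 := by
        funext x; ring
      rw [hfun]
      exact h3.congr_deriv (by norm_num)
    have hev : (fun x => 4 * κ x * (f x) ^ 2)
        =ᶠ[nhds u] fun x => κ'' x - 6 * κ x * κ' x - 4 * κ x + 4 * (κ x) ^ 3 :=
      Filter.eventuallyEq_of_mem (isOpen_Ioo.mem_nhds hu) (fun x hx => hK2 x hx)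
    have heq := hg.unique (hh.congr_of_eventuallyEq hev)
    have hfp : f' u = 4/3 * κ u * f u := by
      have hk := hκdef u hu
      field_simp at hk
      linarith
    rw [hfp] at heq
    linear_combination heq
  intro u hu
  have h2 := hK2 u hu
  have h3 := hK3 u hu
  linear_combination (3 * κ' u + 8 * (κ u) ^ 2) * h2 - 3 * κ u * h3
end

section
/- Suppose κ : I → ℝ is positive, four times differentiable, satisfies the ODE 3κκ''' - 26κ²κ'' - 3κ'κ'' + 72κ³κ' + 32κ³ - 32κ⁵ = 0 on I, and the quantity κ'' - 6κκ' - 4κ + 4κ³ is positive on I, and K' := -2κκ' + κ'' is nonzero on I. Then the function 𝔄(u) = 2√(κ)(-3κ'' + 14κκ' + 8κ - 8κ³) / (κ'' - 6κκ' - 4κ + 4κ³)^{3/2} is constant on I. -/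
/-- If a positive `C⁴` function `κ` satisfies
`3κκ''' - 26κ²κ'' - 3κ'κ'' + 72κ³κ' + 32κ³ - 32κ⁵ = 0`, with
`κ'' - 6κκ' - 4κ + 4κ³ > 0` and `K' = -2κκ' + κ'' ≠ 0`, then
`𝔄 = 2√κ(-3κ'' + 14κκ' + 8κ - 8κ³)/(κ'' - 6κκ' - 4κ + 4κ³)^{3/2}` is constant. -/
theorem stmt_15 (a b : ℝ) (κ κ' κ'' κ''' : ℝ → ℝ)
    (hpos : ∀ u ∈ Set.Ioo a b, 0 < κ u)
    (hdκ : ∀ u ∈ Set.Ioo a b, HasDerivAt κ (κ' u) u)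
    (hdκ' : ∀ u ∈ Set.Ioo a b, HasDerivAt κ' (κ'' u) u)
    (hdκ'' : ∀ u ∈ Set.Ioo a b, HasDerivAt κ'' (κ''' u) u)
    (hode : ∀ u ∈ Set.Ioo a b,
      3 * κ u * κ''' u - 26 * (κ u) ^ 2 * κ'' u - 3 * κ' u * κ'' u
        + 72 * (κ u) ^ 3 * κ' u + 32 * (κ u) ^ 3 - 32 * (κ u) ^ 5 = 0)
    (hden : ∀ u ∈ Set.Ioo a b,
      0 < κ'' u - 6 * κ u * κ' u - 4 * κ u + 4 * (κ u) ^ 3)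
    (hK' : ∀ u ∈ Set.Ioo a b, -2 * κ u * κ' u + κ'' u ≠ 0) :
    ∀ u ∈ Set.Ioo a b, ∀ v ∈ Set.Ioo a b,
      2 * Real.sqrt (κ u) * (-3 * κ'' u + 14 * κ u * κ' u + 8 * κ u - 8 * (κ u) ^ 3)
          / (κ'' u - 6 * κ u * κ' u - 4 * κ u + 4 * (κ u) ^ 3) ^ ((3:ℝ)/2)
        = 2 * Real.sqrt (κ v) * (-3 * κ'' v + 14 * κ v * κ' v + 8 * κ v - 8 * (κ v) ^ 3)
          / (κ'' v - 6 * κ v * κ' v - 4 * κ v + 4 * (κ v) ^ 3) ^ ((3:ℝ)/2) := by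
  set A : ℝ → ℝ := fun u =>
      2 * Real.sqrt (κ u) * (-3 * κ'' u + 14 * κ u * κ' u + 8 * κ u - 8 * (κ u) ^ 3)
        / (κ'' u - 6 * κ u * κ' u - 4 * κ u + 4 * (κ u) ^ 3) ^ ((3:ℝ)/2) with hAdef
  have key : ∀ x ∈ Set.Ioo a b, HasDerivAt A 0 x := by
    intro x hx
    have hκ0 : (0:ℝ) < κ x := hpos x hx
    have hD0 : (0:ℝ) < κ'' x - 6 * κ x * κ' x - 4 * κ x + 4 * (κ x) ^ 3 := hden x hx
    have hk := hdκ x hx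
    have hk1 := hdκ' x hx
    have hk2 := hdκ'' x hx
    -- derivative of sqrt κ
    have hs : HasDerivAt (fun y => Real.sqrt (κ y)) (κ' x / (2 * Real.sqrt (κ x))) x :=
      hk.sqrt hκ0.ne'
    -- derivative of the numerator polynomial part
    have hN : HasDerivAt
        (fun y => -3 * κ'' y + 14 * κ y * κ' y + 8 * κ y - 8 * (κ y) ^ 3)
        (-3 * κ''' x + 14 * (κ' x * κ' x + κ x * κ'' x) + 8 * κ' x
          - 24 * (κ x) ^ 2 * κ' x) x := by
      have h := (((hk2.const_mul (-3:ℝ)).add ((hk.mul hk1).const_mul 14)).add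
        (hk.const_mul 8)).sub ((hk.pow 3).const_mul 8)
      convert h using 2
      · rfl
      · rfl
      · simp only [Pi.add_apply, Pi.sub_apply, Pi.mul_apply, Pi.pow_apply]; ring
      · push_cast; ring
    -- derivative of the denominator polynomial part
    have hD : HasDerivAt
        (fun y => κ'' y - 6 * κ y * κ' y - 4 * κ y + 4 * (κ y) ^ 3)
        (κ''' x - 6 * (κ' x * κ' x + κ x * κ'' x) - 4 * κ' x
          + 12 * (κ x) ^ 2 * κ' x) x := by
      have h := ((hk2.sub ((hk.mul hk1).const_mul 6)).sub (hk.const_mul 4)).add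
        ((hk.pow 3).const_mul 4)
      convert h using 2
      · rfl
      · rfl
      · simp only [Pi.add_apply, Pi.sub_apply, Pi.mul_apply, Pi.pow_apply]; ring
      · push_cast; ring
    have hnum : HasDerivAt
        (fun y => 2 * Real.sqrt (κ y)
          * (-3 * κ'' y + 14 * κ y * κ' y + 8 * κ y - 8 * (κ y) ^ 3))
        (2 * (κ' x / (2 * Real.sqrt (κ x)))
            * (-3 * κ'' x + 14 * κ x * κ' x + 8 * κ x - 8 * (κ x) ^ 3)
          + 2 * Real.sqrt (κ x)
            * (-3 * κ''' x + 14 * (κ' x * κ' x + κ x * κ'' x) + 8 * κ' x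
              - 24 * (κ x) ^ 2 * κ' x)) x := by
      have h := (hs.const_mul (2:ℝ)).mul hN
      convert h using 1
      · rfl
      · rfl
      · rfl
    have hpow : HasDerivAt
        (fun y => (κ'' y - 6 * κ y * κ' y - 4 * κ y + 4 * (κ y) ^ 3) ^ ((3:ℝ)/2))
        ((κ''' x - 6 * (κ' x * κ' x + κ x * κ'' x) - 4 * κ' x + 12 * (κ x) ^ 2 * κ' x)
          * ((3:ℝ)/2)
          * (κ'' x - 6 * κ x * κ' x - 4 * κ x + 4 * (κ x) ^ 3) ^ ((3:ℝ)/2 - 1)) x :=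
      hD.rpow_const (Or.inl hD0.ne')
    have hDpow0 : (κ'' x - 6 * κ x * κ' x - 4 * κ x + 4 * (κ x) ^ 3) ^ ((3:ℝ)/2) ≠ 0 :=
      (Real.rpow_pos_of_pos hD0 _).ne'
    have hA := hnum.div hpow hDpow0
    convert hA using 1
    · rfl
    · rfl
    · rfl
    -- now show the derivative value is zero
    rw [eq_comm, div_eq_zero_iff]
    left
    set s := Real.sqrt (κ x) with hsdef
    have hs0 : s ≠ 0 := (Real.sqrt_pos.2 hκ0).ne'
    have hss : s ^ 2 = κ x := Real.sq_sqrt hκ0.le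
    set D := κ'' x - 6 * κ x * κ' x - 4 * κ x + 4 * (κ x) ^ 3 with hDdef
    have h32 : D ^ ((3:ℝ)/2) = D * D ^ ((3:ℝ)/2 - 1) := by
      rw [← Real.rpow_one_add' hD0.le (by norm_num)]
      norm_num
    rw [h32]
    set q := D ^ ((3:ℝ)/2 - 1) with hqdef
    have hodex := hode x hx
    have hDs : D = κ'' x - 6 * s ^ 2 * κ' x - 4 * s ^ 2 + 4 * (s ^ 2) ^ 3 := by
      rw [hDdef, hss]
    field_simp
    rw [← hss] at hodex ⊢
    rw [hDs]
    linear_combination (q * (κ'' x - 2 * s ^ 2 * κ' x)) * hodex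
  intro u hu v hv
  have main : ∀ p ∈ Set.Ioo a b, ∀ r ∈ Set.Ioo a b, p ≤ r → A r = A p := by
    intro p hp r hr hpr
    have hsub : Set.Icc p r ⊆ Set.Ioo a b := Set.Icc_subset_Ioo hp.1 hr.2
    have := constant_of_has_deriv_right_zero (f := A) (a := p) (b := r)
      (fun y hy => (key y (hsub hy)).continuousAt.continuousWithinAt)
      (fun y hy => (key y (hsub ⟨hy.1, hy.2.le⟩)).hasDerivWithinAt.mono (by
        intro z hz; exact hz))
    exact this r (Set.right_mem_Icc.2 hpr)
  rcases le_total u v with h | h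
  · exact (main u hu v hv h).symm
  · exact main v hv u hu h
end
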